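/- arXiv:2402.04691 — 5 statements merged into one kernel-verified Lean document; each statement's English description precedes it below -/
import Mathlib

section
/- Let A be a compact positive self-adjoint operator on a Hilbert space, let β > 0, let 1 ≤ l ≤ T be integers, and let η_l, ..., η_T be positive reals with η_t‖A‖ < 1 for all l ≤ t ≤ T. Then the operator norm of A^β ∏_{j=l}^{T}(I − η_j A)^2 is at most (β/(2e))^β (∑_{j=l}^{T} η_j)^{−β}. -/
/-!
By the functional calculus the operator is `f A` with `f u = u ^ β * ∏ⱼ (1 - ηⱼ u) ^ 2`, and only
the values of `f` on `σ(A) ⊆ [0, ‖A‖]` matter. There `ηⱼ u < 1`, so `(1 - ηⱼ u) ^ 2 ≤ exp (-2 ηⱼ u)`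
and `f u ≤ u ^ β * exp (-2 S u)` with `S = ∑ ⱼ ηⱼ`; the maximum of the right-hand side over `u ≥ 0`,
attained at `u = β / (2 S)`, is `(β / (2 e S)) ^ β`.
-/

open Finset Real

lemma Real.rpow_mul_exp_neg_mul_le {β c u : ℝ} (hβ : 0 < β) (hc : 0 < c) (hu : 0 ≤ u) :
    u ^ β * exp (-(c * u)) ≤ (β / (c * exp 1)) ^ β := by
  -- substitute `u = (β / c) t` and use `t e^{-t} ≤ e^{-1}`
  set t := c * u / β
  have hexp : exp (-(c * u)) = exp (-t) ^ β := by
    rw [← exp_mul]; simp only [t]; field_simp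
  have hut : u * exp (-t) = β / c * (t * exp (-t)) := by
    simp only [t]; field_simp
  calc u ^ β * exp (-(c * u)) = (u * exp (-t)) ^ β := by
        rw [hexp, mul_rpow hu (exp_pos _).le]
    _ ≤ (β / c * exp (-1)) ^ β := by
        rw [hut]
        have : 0 ≤ t := by positivity
        gcongr
        exact mul_exp_neg_le_exp_neg_one t
    _ = (β / (c * exp 1)) ^ β := by
        rw [exp_neg, div_mul_eq_div_div, div_eq_mul_inv _ (exp 1)]

lemma Real.one_sub_sq_le_exp_neg_two_mul {a : ℝ} (ha : a ≤ 1) : (1 - a) ^ 2 ≤ exp (-(2 * a)) :=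
  calc (1 - a) ^ 2 ≤ exp (-a) ^ 2 := pow_le_pow_left₀ (by linarith) (one_sub_le_exp_neg a) 2
    _ = exp (-(2 * a)) := by rw [← exp_nat_mul]; ring_nf

lemma Real.prod_one_sub_sq_le_exp {ι : Type*} (s : Finset ι) {a : ι → ℝ}
    (ha : ∀ i ∈ s, a i ≤ 1) : ∏ i ∈ s, (1 - a i) ^ 2 ≤ exp (-(2 * ∑ i ∈ s, a i)) :=
  calc ∏ i ∈ s, (1 - a i) ^ 2 ≤ ∏ i ∈ s, exp (-(2 * a i)) :=
        prod_le_prod (fun i _ ↦ sq_nonneg _) fun i hi ↦ one_sub_sq_le_exp_neg_two_mul (ha i hi)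
    _ = exp (-(2 * ∑ i ∈ s, a i)) := by
        rw [← exp_sum, mul_sum, ← sum_neg_distrib]

lemma Real.rpow_mul_prod_one_sub_sq_le {ι : Type*} (s : Finset ι) {η : ι → ℝ} {β x : ℝ}
    (hβ : 0 < β) (hx : 0 ≤ x) (hS : 0 < ∑ i ∈ s, η i) (hηx : ∀ i ∈ s, η i * x ≤ 1) :
    x ^ β * ∏ i ∈ s, (1 - η i * x) ^ 2 ≤
      (β / (2 * exp 1)) ^ β * (∑ i ∈ s, η i) ^ (-β) := by
  set S := ∑ i ∈ s, η i
  calc x ^ β * ∏ i ∈ s, (1 - η i * x) ^ 2 ≤ x ^ β * exp (-(2 * S * x)) := by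
        gcongr
        simpa only [← sum_mul, mul_assoc] using prod_one_sub_sq_le_exp s hηx
    _ ≤ (β / (2 * S * exp 1)) ^ β := rpow_mul_exp_neg_mul_le hβ (by positivity) hx
    _ = (β / (2 * exp 1)) ^ β * S ^ (-β) := by
        rw [mul_right_comm, ← div_div, div_eq_mul_inv _ S, mul_rpow (by positivity) (by positivity),
          inv_rpow hS.le, rpow_neg hS.le]

section CFC

variable {A : Type*} [CStarAlgebra A] {a : A}

lemma spectrum_subset_Icc_norm [PartialOrder A] [StarOrderedRing A] (ha : 0 ≤ a) :
    spectrum ℝ a ⊆ Set.Icc 0 ‖a‖ := by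
  intro x hx
  obtain _ | _ := subsingleton_or_nontrivial A
  · simp [spectrum.of_subsingleton] at hx
  have hx0 : 0 ≤ x := spectrum_nonneg_of_nonneg ha hx
  exact ⟨hx0, by simpa [abs_of_nonneg hx0] using spectrum.norm_le_norm_of_mem hx⟩

lemma cfc_one_sub_mul_sq (ha : IsSelfAdjoint a) (c : ℝ) :
    cfc (fun u : ℝ ↦ (1 - c * u) ^ 2) a = (1 - (c : ℂ) • a) ^ 2 := by
  rw [cfc_pow (fun u : ℝ ↦ 1 - c * u) 2 a, cfc_sub (fun _ : ℝ ↦ 1) (fun u : ℝ ↦ c * u) a,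
    cfc_const_mul_id c a, cfc_const 1 a, map_one, Complex.coe_smul]

lemma list_prod_map_range_cfc (f : ℕ → ℝ → ℝ) (n : ℕ)
    (hf : ∀ k, ContinuousOn (f k) (spectrum ℝ a))
    (ha : IsSelfAdjoint a) :
    ((List.range n).map fun k ↦ cfc (f k) a).prod = cfc (fun u ↦ ∏ k ∈ range n, f k u) a := by
  induction n with
  | zero => simp [cfc_const_one ℝ a]
  | succ n ih =>
    have hprod : ContinuousOn (fun u ↦ ∏ k ∈ range n, f k u) (spectrum ℝ a) :=
      continuousOn_finsetProd _ fun k _ ↦ hf k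
    simp only [List.range_succ, List.map_append, List.prod_append, ih, List.map_cons, List.map_nil,
      List.prod_cons, List.prod_nil, mul_one, prod_range_succ]
    exact (cfc_mul _ _ a hprod (hf n)).symm

end CFC

theorem stmt_0_general {H : Type*} [NormedAddCommGroup H] [InnerProductSpace ℂ H] [CompleteSpace H]
    (A : H →L[ℂ] H) (hpos : A.IsPositive)
    (β : ℝ) (hβ : 0 < β) (l T : ℕ) (hlT : l ≤ T)
    (η : ℕ → ℝ) (hη : ∀ t, l ≤ t → t ≤ T → 0 < η t)
    (hηA : ∀ t, l ≤ t → t ≤ T → η t * ‖A‖ < 1) :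
    ‖cfc (fun u : ℝ => u ^ β) A *
        ((List.range (T + 1 - l)).map (fun k => (1 - ((η (l + k) : ℂ)) • A) ^ 2)).prod‖ ≤
      (β / (2 * Real.exp 1)) ^ β * (∑ j ∈ Finset.Icc l T, η j) ^ (-β) := by
  have hsa : IsSelfAdjoint A := hpos.isSelfAdjoint
  have hrange : ∀ k ∈ range (T + 1 - l), l ≤ l + k ∧ l + k ≤ T := fun k hk ↦ by
    have := mem_range.mp hk; omega
  have hsum : ∑ j ∈ Icc l T, η j = ∑ k ∈ range (T + 1 - l), η (l + k) := by
    rw [← Ico_add_one_right_eq_Icc, sum_Ico_eq_sum_range]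
  have hS : 0 < ∑ j ∈ Icc l T, η j :=
    sum_pos (fun j hj ↦ hη j (mem_Icc.mp hj).1 (mem_Icc.mp hj).2) ⟨l, mem_Icc.mpr ⟨le_rfl, hlT⟩⟩
  simp_rw [← cfc_one_sub_mul_sq hsa]
  rw [list_prod_map_range_cfc _ _ (fun k ↦ by fun_prop) hsa,
    ← cfc_mul _ _ A (continuous_rpow_const hβ.le).continuousOn]
  refine norm_cfc_le (by positivity) fun x hx ↦ ?_
  obtain ⟨hx0, hxA⟩ :=
    spectrum_subset_Icc_norm ((ContinuousLinearMap.nonneg_iff_isPositive A).2 hpos) hx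
  rw [norm_of_nonneg (by positivity), hsum]
  refine rpow_mul_prod_one_sub_sq_le _ hβ hx0 (hsum ▸ hS) fun k hk ↦ ?_
  obtain ⟨hlk, hkT⟩ := hrange k hk
  calc η (l + k) * x ≤ η (l + k) * ‖A‖ := by gcongr; exact (hη _ hlk hkT).le
    _ ≤ 1 := (hηA _ hlk hkT).le

/-- bound `‖A^β ∏_{j=l}^T (I - η_j A)^2‖ ≤ (β/(2e))^β (∑_{j=l}^T η_j)^{-β}`
for a compact positive operator `A` on a Hilbert space, where `A^β` is defined via the
continuous functional calculus. -/
theorem stmt_0 {H : Type*} [NormedAddCommGroup H] [InnerProductSpace ℂ H] [CompleteSpace H]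
    (A : H →L[ℂ] H) (hA : IsCompactOperator (⇑A)) (hpos : A.IsPositive)
    (β : ℝ) (hβ : 0 < β) (l T : ℕ) (hl : 1 ≤ l) (hlT : l ≤ T)
    (η : ℕ → ℝ) (hη : ∀ t, l ≤ t → t ≤ T → 0 < η t)
    (hηA : ∀ t, l ≤ t → t ≤ T → η t * ‖A‖ < 1) :
    ‖cfc (fun u : ℝ => u ^ β) A *
        ((List.range (T + 1 - l)).map (fun k => (1 - ((η (l + k) : ℂ)) • A) ^ 2)).prod‖ ≤
      (β / (2 * Real.exp 1)) ^ β * (∑ j ∈ Finset.Icc l T, η j) ^ (-β) :=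
  stmt_0_general A hpos β hβ l T hlT η hη hηA
end

section
/- Let A be a compact positive self-adjoint operator on a Hilbert space, β > 0, 1 ≤ l ≤ T integers, and η_l, ..., η_T positive reals with η_t‖A‖ < 1 for all l ≤ t ≤ T. Then ‖A^β ∏_{j=l}^{T}(I − η_j A)^2‖ ≤ 2((β/(2e))^β + ‖A‖^β) / (1 + (∑_{j=l}^{T} η_j)^β). -/
/-!
By the continuous functional calculus the norm is at most the supremum over `x ∈ σ(A) ⊆ [0, ‖A‖]`
of `g x = x ^ β * ∏ j, (1 - η j * x) ^ 2`. Each factor lies in `[0, 1]` and is at most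
`exp (-2 η j x)`, so `g x ≤ ‖A‖ ^ β` and, with `S = ∑ j, η j`,
`S ^ β * g x ≤ (S x) ^ β * exp (-2 S x) ≤ (β / (2 e)) ^ β`. Adding the two bounds gives
`(1 + S ^ β) * g x ≤ (β / (2 e)) ^ β + ‖A‖ ^ β`.
-/

section CFC

variable {R A : Type*} {p : A → Prop} [CommSemiring R] [StarRing R] [MetricSpace R]
  [IsTopologicalSemiring R] [ContinuousStar R] [TopologicalSpace A] [Ring A] [StarRing A]
  [Algebra R A] [ContinuousFunctionalCalculus R A p]

lemma cfc_list_prod_map {ι : Type*} (f : ι → R → R) (L : List ι) (a : A)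
    (hf : ∀ i ∈ L, ContinuousOn (f i) (spectrum R a)) (ha : p a := by cfc_tac) :
    cfc (fun x => (L.map fun i => f i x).prod) a = (L.map fun i => cfc (f i) a).prod := by
  induction L with
  | nil => exact cfc_const_one R a
  | cons i L ih =>
    simp only [List.forall_mem_cons] at hf
    simp only [List.map_cons, List.prod_cons]
    rw [cfc_mul _ _ a hf.1 (continuousOn_list_prod L hf.2), ih hf.2]

end CFC

namespace Real

lemma rpow_mul_exp_neg_mul_le_s1 {β c v : ℝ} (hβ : 0 < β) (hc : 0 < c) (hv : 0 ≤ v) :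
    v ^ β * exp (-(c * v)) ≤ (β / (c * exp 1)) ^ β := by
  have key : v * exp (-(c * v / β)) ≤ β / (c * exp 1) := by
    have := mul_exp_neg_le_exp_neg_one (c * v / β)
    rw [exp_neg 1] at this
    calc v * exp (-(c * v / β)) = β / c * (c * v / β * exp (-(c * v / β))) := by
          field_simp
      _ ≤ β / c * (exp 1)⁻¹ := by gcongr
      _ = β / (c * exp 1) := by ring
  calc v ^ β * exp (-(c * v)) = (v * exp (-(c * v / β))) ^ β := by
        rw [mul_rpow hv (exp_pos _).le, ← exp_mul]
        field_simp
    _ ≤ (β / (c * exp 1)) ^ β := by gcongr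

lemma sq_one_sub_le_exp_neg {y : ℝ} (hy : y ≤ 1) : (1 - y) ^ 2 ≤ exp (-(2 * y)) := by
  have h : 1 - y ≤ exp (-y) := by linarith [add_one_le_exp (-y)]
  calc (1 - y) ^ 2 ≤ exp (-y) ^ 2 := by gcongr
    _ = exp (-(2 * y)) := by rw [← exp_nat_mul]; ring_nf

end Real

open Real

section ScalarBounds

variable {L : List ℝ} {x : ℝ}

lemma prod_sq_one_sub_mul_nonneg : 0 ≤ (L.map fun a => (1 - a * x) ^ 2).prod :=
  List.prod_nonneg <| by simp only [List.mem_map]; grind [sq_nonneg]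

lemma prod_sq_one_sub_mul_le_one (hx : 0 ≤ x) (hL : ∀ a ∈ L, 0 ≤ a ∧ a * x ≤ 1) :
    (L.map fun a => (1 - a * x) ^ 2).prod ≤ 1 := by
  refine (List.prod_map_le_prod_map₀ _ (fun _ => 1) (fun _ _ => sq_nonneg _)
    fun a ha => ?_).trans_eq (by simp [List.map_const'])
  obtain ⟨ha0, hax⟩ := hL a ha
  nlinarith [mul_nonneg ha0 hx]

lemma prod_sq_one_sub_mul_le_exp (hL : ∀ a ∈ L, a * x ≤ 1) :
    (L.map fun a => (1 - a * x) ^ 2).prod ≤ exp (-(2 * L.sum * x)) := by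
  have hsum : -(2 * L.sum * x) = (L.map fun a => a * (-(2 * x))).sum := by
    rw [List.sum_map_mul_right, List.map_id']
    ring
  rw [hsum, exp_list_sum, List.map_map]
  exact List.prod_map_le_prod_map₀ _ _ (fun _ _ => sq_nonneg _)
    fun a ha => (sq_one_sub_le_exp_neg (hL a ha)).trans_eq (congrArg exp (by ring))

lemma rpow_mul_prod_sq_one_sub_mul_le {β M : ℝ} (hβ : 0 < β) (hx : 0 ≤ x) (hxM : x ≤ M)
    (hL : ∀ a ∈ L, 0 ≤ a ∧ a * M ≤ 1) :
    x ^ β * (L.map fun a => (1 - a * x) ^ 2).prod ≤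
      ((β / (2 * exp 1)) ^ β + M ^ β) / (1 + L.sum ^ β) := by
  have hLx : ∀ a ∈ L, 0 ≤ a ∧ a * x ≤ 1 := fun a ha =>
    ⟨(hL a ha).1, (mul_le_mul_of_nonneg_left hxM (hL a ha).1).trans (hL a ha).2⟩
  have hS : 0 ≤ L.sum := List.sum_nonneg fun a ha => (hL a ha).1
  set P := (L.map fun a => (1 - a * x) ^ 2).prod
  have hP : 0 ≤ P := prod_sq_one_sub_mul_nonneg
  have hsmall : x ^ β * P ≤ M ^ β :=
    calc x ^ β * P ≤ M ^ β * 1 :=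
          mul_le_mul (rpow_le_rpow hx hxM hβ.le) (prod_sq_one_sub_mul_le_one hx hLx) hP
            (rpow_nonneg (hx.trans hxM) β)
      _ = M ^ β := mul_one _
  have hlarge : x ^ β * P * L.sum ^ β ≤ (β / (2 * exp 1)) ^ β :=
    calc x ^ β * P * L.sum ^ β = (L.sum * x) ^ β * P := by rw [mul_rpow hS hx]; ring
      _ ≤ (L.sum * x) ^ β * exp (-(2 * (L.sum * x))) := by
          gcongr
          exact (prod_sq_one_sub_mul_le_exp fun a ha => (hLx a ha).2).trans_eq (by ring_nf)
      _ ≤ (β / (2 * exp 1)) ^ β := rpow_mul_exp_neg_mul_le_s1 hβ two_pos (by positivity)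
  rw [le_div_iff₀ (by positivity), mul_one_add]
  linarith

end ScalarBounds

section CStarAlgebra

variable {A : Type*} [CStarAlgebra A]

lemma cfc_sq_one_sub_mul (c : ℝ) (a : A) (ha : IsSelfAdjoint a := by cfc_tac) :
    cfc (fun u : ℝ => (1 - c * u) ^ 2) a = (1 - (c : ℂ) • a) ^ 2 := by
  rw [cfc_pow _ _ a, cfc_sub _ _ a, cfc_const_mul _ _ a, cfc_id' ℝ a, cfc_const_one ℝ a,
    Complex.coe_smul]

lemma norm_cfc_rpow_mul_prod_sq_one_sub_smul_le [PartialOrder A] [StarOrderedRing A] {β : ℝ}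
    (hβ : 0 < β) {a : A} (ha : 0 ≤ a) {L : List ℝ} (hL : ∀ c ∈ L, 0 ≤ c ∧ c * ‖a‖ ≤ 1) :
    ‖cfc (fun u : ℝ => u ^ β) a * (L.map fun c : ℝ => (1 - (c : ℂ) • a) ^ 2).prod‖ ≤
      ((β / (2 * exp 1)) ^ β + ‖a‖ ^ β) / (1 + L.sum ^ β) := by
  have hprod : (L.map fun c : ℝ => (1 - (c : ℂ) • a) ^ 2).prod =
      cfc (fun u => (L.map fun c => (1 - c * u) ^ 2).prod) a := by
    rw [cfc_list_prod_map _ _ a (fun _ _ => by fun_prop)]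
    exact congrArg List.prod (List.map_congr_left fun c _ => (cfc_sq_one_sub_mul c a).symm)
  rw [hprod, ← cfc_mul _ _ a (continuous_rpow_const hβ.le).continuousOn
    (continuousOn_list_prod _ fun _ _ => by fun_prop)]
  have hS : 0 ≤ L.sum := List.sum_nonneg fun c hc => (hL c hc).1
  refine norm_cfc_le (by positivity) fun x hx => ?_
  have hx0 : 0 ≤ x := spectrum_nonneg_of_nonneg ha hx
  have hxa : x ≤ ‖a‖ := by
    obtain _ | _ := subsingleton_or_nontrivial A
    · simp [spectrum.of_subsingleton] at hx
    · simpa [Real.norm_of_nonneg hx0] using spectrum.norm_le_norm_of_mem hx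
  rw [Real.norm_of_nonneg (mul_nonneg (by positivity) prod_sq_one_sub_mul_nonneg)]
  exact rpow_mul_prod_sq_one_sub_mul_le hβ hx0 hxa hL

end CStarAlgebra

theorem stmt_1_general {H : Type*} [NormedAddCommGroup H] [InnerProductSpace ℂ H] [CompleteSpace H]
    (A : H →L[ℂ] H) (hpos : A.IsPositive)
    (β : ℝ) (hβ : 0 < β) (l T : ℕ)
    (η : ℕ → ℝ) (hη : ∀ t, l ≤ t → t ≤ T → 0 < η t)
    (hηA : ∀ t, l ≤ t → t ≤ T → η t * ‖A‖ < 1) :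
    ‖cfc (fun u : ℝ => u ^ β) A *
        ((List.range (T + 1 - l)).map (fun k => (1 - ((η (l + k) : ℂ)) • A) ^ 2)).prod‖ ≤
      2 * ((β / (2 * Real.exp 1)) ^ β + ‖A‖ ^ β) / (1 + (∑ j ∈ Finset.Icc l T, η j) ^ β) := by
  set L := (List.range (T + 1 - l)).map fun k => η (l + k)
  have hL : ∀ c ∈ L, 0 ≤ c ∧ c * ‖A‖ ≤ 1 := by
    simp only [L, List.mem_map, List.mem_range]
    rintro _ ⟨k, hk, rfl⟩
    exact ⟨(hη _ (by omega) (by omega)).le, (hηA _ (by omega) (by omega)).le⟩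
  have hsum : ∑ j ∈ Finset.Icc l T, η j = L.sum := by
    rw [← Finset.Ico_add_one_right_eq_Icc, Finset.sum_Ico_eq_sum_range]
    rfl
  have hS : 0 ≤ L.sum := List.sum_nonneg fun c hc => (hL c hc).1
  have hA : 0 ≤ A := A.nonneg_iff_isPositive.mpr hpos
  rw [hsum, show ((List.range (T + 1 - l)).map fun k => (1 - (η (l + k) : ℂ) • A) ^ 2) =
    L.map fun c : ℝ => (1 - (c : ℂ) • A) ^ 2 by simp [L, List.map_map]]
  refine (norm_cfc_rpow_mul_prod_sq_one_sub_smul_le hβ hA hL).trans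
    (div_le_div_of_nonneg_right ?_ (by positivity))
  linarith [show 0 ≤ (β / (2 * Real.exp 1)) ^ β + ‖A‖ ^ β by positivity]

/-- bound `‖A^β ∏_{j=l}^T (I - η_j A)^2‖ ≤ 2((β/(2e))^β + ‖A‖^β)/(1 + (∑_{j=l}^T η_j)^β)`
for a compact positive operator `A` on a Hilbert space, where `A^β` is defined via the
continuous functional calculus. -/
theorem stmt_1 {H : Type*} [NormedAddCommGroup H] [InnerProductSpace ℂ H] [CompleteSpace H]
    (A : H →L[ℂ] H) (hA : IsCompactOperator (⇑A)) (hpos : A.IsPositive)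
    (β : ℝ) (hβ : 0 < β) (l T : ℕ) (hl : 1 ≤ l) (hlT : l ≤ T)
    (η : ℕ → ℝ) (hη : ∀ t, l ≤ t → t ≤ T → 0 < η t)
    (hηA : ∀ t, l ≤ t → t ≤ T → η t * ‖A‖ < 1) :
    ‖cfc (fun u : ℝ => u ^ β) A *
        ((List.range (T + 1 - l)).map (fun k => (1 - ((η (l + k) : ℂ)) • A) ^ 2)).prod‖ ≤
      2 * ((β / (2 * Real.exp 1)) ^ β + ‖A‖ ^ β) / (1 + (∑ j ∈ Finset.Icc l T, η j) ^ β) :=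
  stmt_1_general A hpos β hβ l T η hη hηA
end

section
/- Let H₁ be a separable Hilbert space and x a square-integrable H₁-valued random variable. Then the following are equivalent: (i) there exists c > 0 such that E[⟨x, f⟩⁴] ≤ c (E[⟨x, f⟩²])² for all f ∈ H₁; (ii) for every separable Hilbert space H there exists c > 0 such that for every compact linear operator A : H₁ → H, E[‖Ax‖⁴] ≤ c (E[‖Ax‖²])². -/
/-!
Expand `A x` in a Hilbert basis `(bᵢ)` of the separable (hence countably indexed) target:
`‖A x‖² = ∑ᵢ gᵢ` with `gᵢ = ⟪x, A* bᵢ⟫²`. By (i) each `gᵢ` satisfies `E gᵢ² ≤ c (E gᵢ)²`, and by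
Cauchy–Schwarz `E (gᵢ gⱼ) ≤ √(E gᵢ²) √(E gⱼ²) ≤ c E gᵢ E gⱼ`; summing over `i, j` gives
`E (∑ gᵢ)² ≤ c (E ∑ gᵢ)²`. Conversely, (i) is (ii) for the rank-one operators `⟪f, ·⟫ : H₁ → ℝ`.
-/

open MeasureTheory
open scoped RealInnerProductSpace ENNReal

theorem ENNReal.tsum_mul_tsum {ι κ : Type*} (f : ι → ℝ≥0∞) (g : κ → ℝ≥0∞) :
    (∑' i, f i) * ∑' j, g j = ∑' i, ∑' j, f i * g j := by
  simp_rw [← ENNReal.tsum_mul_right, ← ENNReal.tsum_mul_left]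

theorem Orthonormal.countable_of_separableSpace {ι E : Type*} [NormedAddCommGroup E]
    [InnerProductSpace ℝ E] [TopologicalSpace.SeparableSpace E] {v : ι → E}
    (hv : Orthonormal ℝ v) : Countable ι := by
  refine Pairwise.countable_of_isOpen_disjoint (s := fun i => Metric.ball (v i) (1 / 2))
    (fun i j hij => Metric.ball_disjoint_ball ?_) (fun _ => Metric.isOpen_ball)
    (fun _ => Metric.nonempty_ball.2 one_half_pos)
  have hsq : ‖v i - v j‖ ^ 2 = 2 := by
    rw [norm_sub_sq_real, hv.1 i, hv.1 j, hv.2 hij]; norm_num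
  rw [dist_eq_norm]
  nlinarith [norm_nonneg (v i - v j)]

theorem HilbertBasis.hasSum_inner_adjoint_sq {ι E F : Type*} [NormedAddCommGroup E]
    [InnerProductSpace ℝ E] [CompleteSpace E] [NormedAddCommGroup F] [InnerProductSpace ℝ F]
    [CompleteSpace F] (b : HilbertBasis ι ℝ F) (A : E →L[ℝ] F) (v : E) :
    HasSum (fun i => ⟪v, ContinuousLinearMap.adjoint A (b i)⟫ ^ 2) (‖A v‖ ^ 2) := by
  have hterm (i : ι) :
      ⟪v, ContinuousLinearMap.adjoint A (b i)⟫ ^ 2 = ⟪A v, b i⟫ * ⟪b i, A v⟫ := by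
    rw [ContinuousLinearMap.adjoint_inner_right, real_inner_comm (b i), sq]
  simpa only [hterm, real_inner_self_eq_norm_sq] using b.hasSum_inner_mul_inner (A v) (A v)

theorem norm_innerSL_apply_pow {E : Type*} [NormedAddCommGroup E] [InnerProductSpace ℝ E]
    {n : ℕ} (hn : Even n) (f v : E) : ‖innerSL ℝ f v‖ ^ n = ⟪v, f⟫ ^ n := by
  rw [innerSL_apply_apply, Real.norm_eq_abs, hn.pow_abs, real_inner_comm]

section Moments

variable {Ω : Type*} [MeasurableSpace Ω] {μ : Measure Ω}

theorem MeasureTheory.Integrable.norm_clm_apply_pow {E F : Type*} [NormedAddCommGroup E]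
    [NormedSpace ℝ E] [NormedAddCommGroup F] [NormedSpace ℝ F] {x : Ω → E}
    (hx : AEStronglyMeasurable x μ)
    {n : ℕ} (hxn : Integrable (fun ω => ‖x ω‖ ^ n) μ) (A : E →L[ℝ] F) :
    Integrable (fun ω => ‖A (x ω)‖ ^ n) μ := by
  refine (hxn.const_mul (‖A‖ ^ n)).mono'
    ((A.continuous.comp_aestronglyMeasurable hx).norm.pow n) (.of_forall fun ω => ?_)
  rw [Real.norm_eq_abs, abs_of_nonneg (by positivity), ← mul_pow]
  exact pow_le_pow_left₀ (norm_nonneg _) (A.le_opNorm _) n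

theorem lintegral_mul_le_of_lintegral_sq_le {f g : Ω → ℝ≥0∞} (hf : AEMeasurable f μ)
    (hg : AEMeasurable g μ) {C : ℝ≥0∞}
    (hf2 : ∫⁻ ω, f ω ^ 2 ∂μ ≤ C * (∫⁻ ω, f ω ∂μ) ^ 2)
    (hg2 : ∫⁻ ω, g ω ^ 2 ∂μ ≤ C * (∫⁻ ω, g ω ∂μ) ^ 2) :
    ∫⁻ ω, f ω * g ω ∂μ ≤ C * ((∫⁻ ω, f ω ∂μ) * ∫⁻ ω, g ω ∂μ) := by
  have sqrt_sq (a : ℝ≥0∞) : (a ^ 2) ^ (1 / 2 : ℝ) = a := by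
    rw [← ENNReal.rpow_natCast, ← ENNReal.rpow_mul]; norm_num
  have sqrt_le {h : Ω → ℝ≥0∞} (h2 : ∫⁻ ω, h ω ^ 2 ∂μ ≤ C * (∫⁻ ω, h ω ∂μ) ^ 2) :
      (∫⁻ ω, h ω ^ (2 : ℝ) ∂μ) ^ (1 / 2 : ℝ) ≤ C ^ (1 / 2 : ℝ) * ∫⁻ ω, h ω ∂μ := by
    simp only [ENNReal.rpow_two]
    calc (∫⁻ ω, h ω ^ 2 ∂μ) ^ (1 / 2 : ℝ)
        ≤ (C * (∫⁻ ω, h ω ∂μ) ^ 2) ^ (1 / 2 : ℝ) := ENNReal.rpow_le_rpow h2 (by norm_num)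
      _ = C ^ (1 / 2 : ℝ) * ∫⁻ ω, h ω ∂μ := by
        rw [ENNReal.mul_rpow_of_nonneg _ _ (by norm_num), sqrt_sq]
  calc ∫⁻ ω, f ω * g ω ∂μ
      ≤ (∫⁻ ω, f ω ^ (2 : ℝ) ∂μ) ^ (1 / 2 : ℝ) * (∫⁻ ω, g ω ^ (2 : ℝ) ∂μ) ^ (1 / 2 : ℝ) :=
        ENNReal.lintegral_mul_le_Lp_mul_Lq μ .two_two hf hg
    _ ≤ C ^ (1 / 2 : ℝ) * (∫⁻ ω, f ω ∂μ) * (C ^ (1 / 2 : ℝ) * ∫⁻ ω, g ω ∂μ) :=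
        mul_le_mul' (sqrt_le hf2) (sqrt_le hg2)
    _ = C * ((∫⁻ ω, f ω ∂μ) * ∫⁻ ω, g ω ∂μ) := by
      rw [mul_mul_mul_comm, ← ENNReal.mul_rpow_of_nonneg _ _ (by norm_num), ← sq, sqrt_sq]

theorem lintegral_tsum_sq_le {ι : Type*} [Countable ι] {g : ι → Ω → ℝ≥0∞}
    (hg : ∀ i, AEMeasurable (g i) μ) {C : ℝ≥0∞}
    (hC : ∀ i, ∫⁻ ω, g i ω ^ 2 ∂μ ≤ C * (∫⁻ ω, g i ω ∂μ) ^ 2) :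
    ∫⁻ ω, (∑' i, g i ω) ^ 2 ∂μ ≤ C * (∫⁻ ω, ∑' i, g i ω ∂μ) ^ 2 := by
  calc ∫⁻ ω, (∑' i, g i ω) ^ 2 ∂μ = ∑' i, ∑' j, ∫⁻ ω, g i ω * g j ω ∂μ := by
        simp_rw [sq, ENNReal.tsum_mul_tsum]
        have hprod (i j : ι) : AEMeasurable (fun ω => g i ω * g j ω) μ := (hg i).mul (hg j)
        rw [lintegral_tsum fun i => AEMeasurable.tsum (hprod i)]
        exact tsum_congr fun i => lintegral_tsum (hprod i)
    _ ≤ ∑' i, ∑' j, C * ((∫⁻ ω, g i ω ∂μ) * ∫⁻ ω, g j ω ∂μ) :=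
        ENNReal.tsum_le_tsum fun i => ENNReal.tsum_le_tsum fun j =>
          lintegral_mul_le_of_lintegral_sq_le (hg i) (hg j) (hC i) (hC j)
    _ = C * (∫⁻ ω, ∑' i, g i ω ∂μ) ^ 2 := by
        rw [lintegral_tsum hg, sq, ENNReal.tsum_mul_tsum]
        simp_rw [ENNReal.tsum_mul_left]

theorem integral_sq_le_iff_lintegral_ofReal [IsFiniteMeasure μ] {u : Ω → ℝ} (hu0 : ∀ ω, 0 ≤ u ω)
    (hu : AEStronglyMeasurable u μ) (hu2 : Integrable (fun ω => u ω ^ 2) μ) {c : ℝ}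
    (hc : 0 ≤ c) :
    ∫ ω, u ω ^ 2 ∂μ ≤ c * (∫ ω, u ω ∂μ) ^ 2 ↔
      ∫⁻ ω, ENNReal.ofReal (u ω) ^ 2 ∂μ ≤
        ENNReal.ofReal c * (∫⁻ ω, ENNReal.ofReal (u ω) ∂μ) ^ 2 := by
  have hu1 : Integrable u μ := ((memLp_two_iff_integrable_sq hu).2 hu2).integrable one_le_two
  simp_rw [← ENNReal.ofReal_pow (hu0 _),
    ← ofReal_integral_eq_lintegral_ofReal hu1 (.of_forall hu0),
    ← ofReal_integral_eq_lintegral_ofReal hu2 (.of_forall fun ω => by positivity),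
    ← ENNReal.ofReal_pow (integral_nonneg hu0), ← ENNReal.ofReal_mul hc]
  exact (ENNReal.ofReal_le_ofReal_iff (by positivity)).symm

theorem integral_norm_clm_apply_pow_four_le {H₁ H : Type*} [NormedAddCommGroup H₁]
    [InnerProductSpace ℝ H₁] [CompleteSpace H₁] [NormedAddCommGroup H] [InnerProductSpace ℝ H]
    [CompleteSpace H] [SecondCountableTopology H] [IsFiniteMeasure μ] {x : Ω → H₁}
    (hx : AEStronglyMeasurable x μ)
    (hx4 : Integrable (fun ω => ‖x ω‖ ^ 4) μ) {c : ℝ} (hc : 0 ≤ c)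
    (hmoment : ∀ f : H₁, ∫ ω, ⟪x ω, f⟫ ^ 4 ∂μ ≤ c * (∫ ω, ⟪x ω, f⟫ ^ 2 ∂μ) ^ 2)
    (A : H₁ →L[ℝ] H) :
    ∫ ω, ‖A (x ω)‖ ^ 4 ∂μ ≤ c * (∫ ω, ‖A (x ω)‖ ^ 2 ∂μ) ^ 2 := by
  obtain ⟨w, b, -⟩ := exists_hilbertBasis ℝ H
  have : Countable w := b.orthonormal.countable_of_separableSpace
  set f : w → H₁ := fun i => ContinuousLinearMap.adjoint A (b i)
  have hcoord (i : w) : AEStronglyMeasurable (fun ω => ⟪x ω, f i⟫ ^ 2) μ :=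
    (hx.inner aestronglyMeasurable_const).pow 2
  have hcoord_moment (i : w) :
      ∫⁻ ω, ENNReal.ofReal (⟪x ω, f i⟫ ^ 2) ^ 2 ∂μ ≤
        ENNReal.ofReal c * (∫⁻ ω, ENNReal.ofReal (⟪x ω, f i⟫ ^ 2) ∂μ) ^ 2 := by
    have hint : Integrable (fun ω => (⟪x ω, f i⟫ ^ 2) ^ 2) μ := by
      simpa only [norm_innerSL_apply_pow (by decide : Even 4), ← pow_mul] using
        hx4.norm_clm_apply_pow hx (innerSL ℝ (f i))
    refine (integral_sq_le_iff_lintegral_ofReal (fun _ => sq_nonneg _) (hcoord i) hint hc).1 ?_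
    simpa only [← pow_mul] using hmoment (f i)
  have hsum (ω : Ω) :
      ENNReal.ofReal (‖A (x ω)‖ ^ 2) = ∑' i, ENNReal.ofReal (⟪x ω, f i⟫ ^ 2) := by
    have h := b.hasSum_inner_adjoint_sq A (x ω)
    rw [← ENNReal.ofReal_tsum_of_nonneg (fun _ => sq_nonneg _) h.summable, h.tsum_eq]
  have key : ∫⁻ ω, ENNReal.ofReal (‖A (x ω)‖ ^ 2) ^ 2 ∂μ ≤
      ENNReal.ofReal c * (∫⁻ ω, ENNReal.ofReal (‖A (x ω)‖ ^ 2) ∂μ) ^ 2 := by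
    simpa only [hsum] using lintegral_tsum_sq_le
      (fun i => (hcoord i).aemeasurable.ennreal_ofReal) hcoord_moment
  have hint : Integrable (fun ω => (‖A (x ω)‖ ^ 2) ^ 2) μ := by
    simpa only [← pow_mul] using hx4.norm_clm_apply_pow hx A
  simpa only [← pow_mul] using (integral_sq_le_iff_lintegral_ofReal (fun _ => sq_nonneg _)
    ((A.continuous.comp_aestronglyMeasurable hx).norm.pow 2) hint hc).2 key

end Moments

theorem stmt_3_general {H₁ : Type} [NormedAddCommGroup H₁] [InnerProductSpace ℝ H₁] [CompleteSpace H₁]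
    {Ω : Type} [MeasurableSpace Ω] (μ : Measure Ω) [IsProbabilityMeasure μ]
    (x : Ω → H₁) (hx : AEStronglyMeasurable x μ)
    (hx4 : Integrable (fun ω => ‖x ω‖ ^ 4) μ) :
    (∃ c > (0 : ℝ), ∀ f : H₁,
        ∫ ω, ⟪x ω, f⟫ ^ 4 ∂μ ≤ c * (∫ ω, ⟪x ω, f⟫ ^ 2 ∂μ) ^ 2) ↔
      (∀ (H : Type) (_ : NormedAddCommGroup H), ∀ (_ : InnerProductSpace ℝ H),
        ∀ (_ : CompleteSpace H) (_ : SecondCountableTopology H),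
        ∃ c > (0 : ℝ), ∀ A : H₁ →L[ℝ] H, IsCompactOperator (⇑A) →
          ∫ ω, ‖A (x ω)‖ ^ 4 ∂μ ≤ c * (∫ ω, ‖A (x ω)‖ ^ 2 ∂μ) ^ 2) := by
  constructor
  · rintro ⟨c, hc, hmoment⟩ H _ _ _ _
    exact ⟨c, hc, fun A _ => integral_norm_clm_apply_pow_four_le hx hx4 hc.le hmoment A⟩
  · intro h
    obtain ⟨c, hc, hA⟩ := h ℝ inferInstance inferInstance inferInstance inferInstance
    refine ⟨c, hc, fun f => ?_⟩
    simpa only [norm_innerSL_apply_pow (by decide : Even 4),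
      norm_innerSL_apply_pow even_two] using
      hA (innerSL ℝ f) (isCompactOperator_of_locallyCompactSpace_dom _)

/-- for a square(-fourth)-integrable Hilbert-space-valued random variable `x`,
the fourth-moment condition on linear functionals is equivalent to the fourth-moment
condition on images under compact linear operators into arbitrary separable Hilbert spaces. -/
theorem stmt_3 {H₁ : Type} [NormedAddCommGroup H₁] [InnerProductSpace ℝ H₁] [CompleteSpace H₁]
    [SecondCountableTopology H₁]
    {Ω : Type} [MeasurableSpace Ω] (μ : Measure Ω) [IsProbabilityMeasure μ]
    (x : Ω → H₁) (hx : AEStronglyMeasurable x μ)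
    (hx4 : Integrable (fun ω => ‖x ω‖ ^ 4) μ) :
    (∃ c > (0 : ℝ), ∀ f : H₁,
        ∫ ω, ⟪x ω, f⟫ ^ 4 ∂μ ≤ c * (∫ ω, ⟪x ω, f⟫ ^ 2 ∂μ) ^ 2) ↔
      (∀ (H : Type) (_ : NormedAddCommGroup H), ∀ (_ : InnerProductSpace ℝ H),
        ∀ (_ : CompleteSpace H) (_ : SecondCountableTopology H),
        ∃ c > (0 : ℝ), ∀ A : H₁ →L[ℝ] H, IsCompactOperator (⇑A) →
          ∫ ω, ‖A (x ω)‖ ^ 4 ∂μ ≤ c * (∫ ω, ‖A (x ω)‖ ^ 2 ∂μ) ^ 2) :=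
  stmt_3_general μ x hx hx4
end

section
/- Let 0 < θ < 1, v > 0, and for t ≥ 3 define A₂ = ∫_{t/2}^{t} u^{−2θ} / (1 + (t^{1−θ} − u^{1−θ})^v) du. Then there exists a constant c₂ depending only on θ and v such that A₂ ≤ c₂ · t^{−θ} if v > 1, A₂ ≤ c₂ · t^{−θ} log t if v = 1, and A₂ ≤ c₂ · t^{1−v−θ(2−v)} if 0 < v < 1. -/
open Real MeasureTheory intervalIntegral Set

lemma h_contOn (v : ℝ) (hv : 0 < v) :
    ContinuousOn (fun x : ℝ => 1 / (1 + x ^ v)) {x : ℝ | 0 ≤ x} := by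
  apply ContinuousOn.div continuousOn_const
  · exact continuousOn_const.add (continuousOn_id.rpow_const fun x hx => Or.inr hv.le)
  · intro x hx
    have h1 : (0:ℝ) ≤ x ^ v := Real.rpow_nonneg hx v
    exact ne_of_gt (by linarith)

lemma h_intble (v : ℝ) (hv : 0 < v) {a b : ℝ} (ha : 0 ≤ a) (hab : a ≤ b) :
    IntervalIntegrable (fun x : ℝ => 1 / (1 + x ^ v)) volume a b :=
  ((h_contOn v hv).mono (fun _x hx => le_trans ha hx.1)).intervalIntegrable_of_Icc hab

lemma I_nonneg (v : ℝ) {X : ℝ} (hX : 0 ≤ X) :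
    0 ≤ ∫ x in (0:ℝ)..X, 1 / (1 + x ^ v) := by
  apply intervalIntegral.integral_nonneg hX
  intro x hx
  have h1 : (0:ℝ) ≤ x ^ v := Real.rpow_nonneg hx.1 v
  positivity

lemma I_le_one (v : ℝ) (hv : 0 < v) {X : ℝ} (hX0 : 0 ≤ X) (hX1 : X ≤ 1) :
    ∫ x in (0:ℝ)..X, 1 / (1 + x ^ v) ≤ 1 := by
  have h1 : (∫ x in (0:ℝ)..X, 1 / (1 + x ^ v)) ≤ ∫ _x in (0:ℝ)..X, (1:ℝ) := by
    apply integral_mono_on hX0 (h_intble v hv le_rfl hX0) intervalIntegrable_const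
    intro x hx
    have h2 : (0:ℝ) ≤ x ^ v := Real.rpow_nonneg hx.1 v
    rw [div_le_one (by linarith)]
    linarith
  simpa using h1.trans (by simp [hX1])

lemma I_split (v : ℝ) (hv : 0 < v) {X : ℝ} (hX : 1 ≤ X) :
    ∫ x in (0:ℝ)..X, 1 / (1 + x ^ v) ≤ 1 + ∫ x in (1:ℝ)..X, x ^ (-v) := by
  have hint1 := h_intble v hv (le_refl (0:ℝ)) (zero_le_one)
  have hint2 := h_intble v hv (zero_le_one) hX
  rw [← integral_add_adjacent_intervals hint1 hint2]
  apply add_le_add (I_le_one v hv zero_le_one le_rfl)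
  apply integral_mono_on hX hint2
  · apply ContinuousOn.intervalIntegrable_of_Icc hX
    exact continuousOn_id.rpow_const fun x hx => Or.inl (ne_of_gt (lt_of_lt_of_le zero_lt_one hx.1))
  · intro x hx
    have hx0 : (0:ℝ) < x := lt_of_lt_of_le zero_lt_one hx.1
    have hxv : (0:ℝ) < x ^ v := Real.rpow_pos_of_pos hx0 v
    rw [Real.rpow_neg hx0.le, ← one_div]
    apply one_div_le_one_div_of_le hxv (by linarith)

lemma tail_gt (v : ℝ) (hv : 1 < v) {X : ℝ} (hX : 1 ≤ X) :
    ∫ x in (1:ℝ)..X, x ^ (-v) ≤ (v - 1)⁻¹ := by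
  have h0 : (0:ℝ) ∉ uIcc (1:ℝ) X := by
    rw [uIcc_of_le hX]; rintro ⟨h1, -⟩; linarith
  rw [integral_rpow (Or.inr ⟨by intro h; linarith, h0⟩), one_rpow]
  rw [div_le_iff_of_neg (by linarith : -v + 1 < 0)]
  rw [show (-v + 1 : ℝ) = -(v - 1) by ring, mul_neg,
    inv_mul_cancel₀ (by intro h; rw [sub_eq_zero] at h; linarith)]
  have hs : (0:ℝ) ≤ X ^ (-(v - 1)) := Real.rpow_nonneg (by linarith) _
  linarith

lemma tail_eq {X : ℝ} (hX : 1 ≤ X) :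
    ∫ x in (1:ℝ)..X, x ^ (-(1:ℝ)) = Real.log X := by
  have h0 : (0:ℝ) ∉ uIcc (1:ℝ) X := by
    rw [uIcc_of_le hX]; rintro ⟨h1, -⟩; linarith
  rw [intervalIntegral.integral_congr (g := fun x : ℝ => x⁻¹)
    (fun x _hx => Real.rpow_neg_one x), integral_inv h0, div_one]

lemma tail_lt (v : ℝ) (hv : v < 1) {X : ℝ} (hX : 1 ≤ X) :
    ∫ x in (1:ℝ)..X, x ^ (-v) ≤ X ^ (1 - v) / (1 - v) := by
  rw [integral_rpow (Or.inl (by linarith)), one_rpow,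
    show (-v + 1 : ℝ) = 1 - v by ring]
  have h1 : (0:ℝ) < 1 - v := by linarith
  gcongr
  linarith

set_option maxHeartbeats 1000000 in
/-- there is a constant `c₂ = c₂(θ, v)` such that for all `t ≥ 3` the integral
`A₂ = ∫_{t/2}^{t} u^{-2θ}/(1 + (t^{1-θ} - u^{1-θ})^v) du` is bounded by `c₂ t^{-θ}` if `v > 1`,
by `c₂ t^{-θ} log t` if `v = 1`, and by `c₂ t^{1-v-θ(2-v)}` if `0 < v < 1`. -/
theorem stmt_13 (θ v : ℝ) (hθ0 : 0 < θ) (hθ1 : θ < 1) (hv : 0 < v) :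
    ∃ c₂ > (0 : ℝ), ∀ t : ℝ, 3 ≤ t →
      (1 < v →
        ∫ u in (t / 2)..t, u ^ (-(2 * θ)) / (1 + (t ^ (1 - θ) - u ^ (1 - θ)) ^ v) ≤
          c₂ * t ^ (-θ)) ∧
      (v = 1 →
        ∫ u in (t / 2)..t, u ^ (-(2 * θ)) / (1 + (t ^ (1 - θ) - u ^ (1 - θ)) ^ v) ≤
          c₂ * (t ^ (-θ) * Real.log t)) ∧
      (v < 1 →
        ∫ u in (t / 2)..t, u ^ (-(2 * θ)) / (1 + (t ^ (1 - θ) - u ^ (1 - θ)) ^ v) ≤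
          c₂ * t ^ (1 - v - θ * (2 - v))) := by
  have hθ' : (0:ℝ) < 1 - θ := by linarith
  refine ⟨2 * (1 - θ)⁻¹ * (2 + |1 - v|⁻¹), mul_pos (mul_pos two_pos (inv_pos.mpr hθ'))
    (by positivity), ?_⟩
  intro t ht
  have ht0 : (0:ℝ) < t := by linarith
  have ht2 : (0:ℝ) < t / 2 := by linarith
  have ht2t : t / 2 ≤ t := by linarith
  set T := t ^ (1 - θ) with hTdef
  set A := (t / 2) ^ (1 - θ) with hAdef
  have hA0 : (0:ℝ) ≤ A := Real.rpow_nonneg ht2.le _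
  have hAT : A ≤ T := Real.rpow_le_rpow ht2.le ht2t hθ'.le
  have hX0 : (0:ℝ) ≤ T - A := by linarith
  have hT1 : (1:ℝ) ≤ T := by
    rw [hTdef]
    calc (1:ℝ) = t ^ (0:ℝ) := (Real.rpow_zero t).symm
    _ ≤ t ^ (1 - θ) := Real.rpow_le_rpow_of_exponent_le (by linarith) hθ'.le
  have hTt : T ≤ t := by
    rw [hTdef]
    calc t ^ (1 - θ) ≤ t ^ (1:ℝ) := Real.rpow_le_rpow_of_exponent_le (by linarith) (by linarith)
    _ = t := Real.rpow_one t
  have hne : ∀ u ∈ Icc (t/2) t, u ≠ 0 := fun u hu => ne_of_gt (lt_of_lt_of_le ht2 hu.1)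
  have hub : ∀ u ∈ Icc (t/2) t, u ^ (1 - θ) ≤ T :=
    fun u hu => Real.rpow_le_rpow (by linarith [hu.1]) hu.2 hθ'.le
  have hDpos : ∀ u ∈ Icc (t/2) t, (0:ℝ) < 1 + (T - u ^ (1 - θ)) ^ v := by
    intro u hu
    have h1 : (0:ℝ) ≤ (T - u ^ (1 - θ)) ^ v :=
      Real.rpow_nonneg (by linarith [hub u hu]) v
    linarith
  have contD : ContinuousOn (fun u : ℝ => 1 + (T - u ^ (1 - θ)) ^ v) (Icc (t/2) t) :=
    continuousOn_const.add (((continuousOn_const.sub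
      (continuousOn_id.rpow_const fun u hu => Or.inl (hne u hu))).rpow_const
      fun u _hu => Or.inr hv.le))
  have int1 : IntervalIntegrable
      (fun u : ℝ => u ^ (-(2 * θ)) / (1 + (T - u ^ (1 - θ)) ^ v)) volume (t/2) t := by
    apply ContinuousOn.intervalIntegrable_of_Icc ht2t
    exact (continuousOn_id.rpow_const fun u hu => Or.inl (hne u hu)).div contD
      (fun u hu => ne_of_gt (hDpos u hu))
  have int2 : IntervalIntegrable
      (fun u : ℝ => (t/2) ^ (-θ) * (u ^ (-θ) / (1 + (T - u ^ (1 - θ)) ^ v))) volume (t/2) t := by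
    apply ContinuousOn.intervalIntegrable_of_Icc ht2t
    exact continuousOn_const.mul ((continuousOn_id.rpow_const fun u hu =>
      Or.inl (hne u hu)).div contD (fun u hu => ne_of_gt (hDpos u hu)))
  have step1 : (∫ u in (t/2)..t, u ^ (-(2 * θ)) / (1 + (T - u ^ (1 - θ)) ^ v))
      ≤ (t/2) ^ (-θ) * ∫ u in (t/2)..t, u ^ (-θ) / (1 + (T - u ^ (1 - θ)) ^ v) := by
    rw [← intervalIntegral.integral_const_mul]
    apply integral_mono_on ht2t int1 int2
    intro u hu
    have hu0 : (0:ℝ) < u := lt_of_lt_of_le ht2 hu.1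
    have hD := hDpos u hu
    have hnum : u ^ (-(2 * θ)) ≤ (t/2) ^ (-θ) * u ^ (-θ) := by
      have he : u ^ (-(2 * θ)) = u ^ (-θ) * u ^ (-θ) := by
        rw [← Real.rpow_add hu0]; ring_nf
      rw [he]
      exact mul_le_mul_of_nonneg_right
        (Real.rpow_le_rpow_of_nonpos ht2 hu.1 (by linarith))
        (Real.rpow_nonneg hu0.le _)
    rw [← mul_div_assoc]
    exact div_le_div_of_nonneg_right hnum hD.le
  have h1θ : (1 - θ : ℝ) ≠ 0 := ne_of_gt hθ'
  have hderiv : ∀ x ∈ uIcc (t/2) t,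
      HasDerivAt (fun u : ℝ => u ^ (1 - θ)) ((1 - θ) * x ^ (-θ)) x := by
    intro x hx
    rw [uIcc_of_le ht2t] at hx
    have h := Real.hasDerivAt_rpow_const (x := x) (p := 1 - θ) (Or.inl (hne x hx))
    have h2 : (1 - θ - 1 : ℝ) = -θ := by ring
    rwa [h2] at h
  have hf'c : ContinuousOn (fun x : ℝ => (1 - θ) * x ^ (-θ)) (uIcc (t/2) t) := by
    rw [uIcc_of_le ht2t]
    exact continuousOn_const.mul (continuousOn_id.rpow_const fun u hu => Or.inl (hne u hu))
  have hgc : ContinuousOn (fun y : ℝ => (1 - θ)⁻¹ * (1 / (1 + (T - y) ^ v)))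
      ((fun u : ℝ => u ^ (1 - θ)) '' uIcc (t/2) t) := by
    apply ContinuousOn.mono (s := {y : ℝ | y ≤ T})
    · apply continuousOn_const.mul
      apply ContinuousOn.div continuousOn_const
      · exact continuousOn_const.add
          ((continuousOn_const.sub continuousOn_id).rpow_const fun y _hy => Or.inr hv.le)
      · intro y hy
        have h1 : (0:ℝ) ≤ (T - y) ^ v :=
          Real.rpow_nonneg (by simpa [sub_nonneg] using hy) v
        exact ne_of_gt (by linarith)
    · rintro y ⟨u, hu, rfl⟩
      rw [uIcc_of_le ht2t] at hu
      exact hub u hu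
  have subst := intervalIntegral.integral_comp_smul_deriv' hderiv hf'c hgc
  have step2 : (∫ u in (t/2)..t, u ^ (-θ) / (1 + (T - u ^ (1 - θ)) ^ v))
      = (1 - θ)⁻¹ * ∫ x in (0:ℝ)..(T - A), 1 / (1 + x ^ v) := by
    have e1 : (∫ u in (t/2)..t, u ^ (-θ) / (1 + (T - u ^ (1 - θ)) ^ v))
        = ∫ x in (t/2)..t, ((1 - θ) * x ^ (-θ)) •
          ((fun y : ℝ => (1 - θ)⁻¹ * (1 / (1 + (T - y) ^ v))) ∘ (fun u : ℝ => u ^ (1 - θ))) x := by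
      apply intervalIntegral.integral_congr
      intro x hx
      rw [uIcc_of_le ht2t] at hx
      have hD := ne_of_gt (hDpos x hx)
      simp only [Function.comp, smul_eq_mul]
      field_simp
    rw [e1, subst, intervalIntegral.integral_const_mul]
    congr 1
    have h := intervalIntegral.integral_comp_sub_left
      (a := A) (b := T) (fun x : ℝ => 1 / (1 + x ^ v)) T
    simpa [sub_self] using h
  set I := ∫ x in (0:ℝ)..(T - A), 1 / (1 + x ^ v) with hIdef
  have hI0 : 0 ≤ I := I_nonneg v hX0
  have hhalf : (t/2) ^ (-θ) ≤ 2 * t ^ (-θ) := by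
    have e : (t/2) ^ (-θ) = t ^ (-θ) * 2 ^ θ := by
      rw [Real.div_rpow ht0.le (by norm_num : (0:ℝ) ≤ 2),
        Real.rpow_neg (by norm_num : (0:ℝ) ≤ 2), div_eq_mul_inv, inv_inv]
    rw [e]
    have h2 : (2:ℝ) ^ θ ≤ 2 := by
      calc (2:ℝ) ^ θ ≤ 2 ^ (1:ℝ) := Real.rpow_le_rpow_of_exponent_le (by norm_num) hθ1.le
      _ = 2 := Real.rpow_one 2
    have ht' : (0:ℝ) ≤ t ^ (-θ) := Real.rpow_nonneg ht0.le _
    nlinarith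
  have main : (∫ u in (t/2)..t, u ^ (-(2 * θ)) / (1 + (T - u ^ (1 - θ)) ^ v))
      ≤ 2 * t ^ (-θ) * ((1 - θ)⁻¹ * I) := by
    calc (∫ u in (t/2)..t, u ^ (-(2 * θ)) / (1 + (T - u ^ (1 - θ)) ^ v))
        ≤ (t/2) ^ (-θ) * ∫ u in (t/2)..t, u ^ (-θ) / (1 + (T - u ^ (1 - θ)) ^ v) := step1
      _ = (t/2) ^ (-θ) * ((1 - θ)⁻¹ * I) := by rw [step2]
      _ ≤ 2 * t ^ (-θ) * ((1 - θ)⁻¹ * I) :=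
          mul_le_mul_of_nonneg_right hhalf (mul_nonneg (inv_nonneg.mpr hθ'.le) hI0)
  have bump : ∀ B : ℝ, I ≤ B →
      (∫ u in (t/2)..t, u ^ (-(2 * θ)) / (1 + (T - u ^ (1 - θ)) ^ v))
        ≤ 2 * t ^ (-θ) * ((1 - θ)⁻¹ * B) := by
    intro B hB
    refine main.trans ?_
    have ht' : (0:ℝ) ≤ t ^ (-θ) := Real.rpow_nonneg ht0.le _
    have h1 : (0:ℝ) ≤ (1 - θ)⁻¹ := inv_nonneg.mpr hθ'.le
    have := mul_le_mul_of_nonneg_left hB h1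
    nlinarith
  refine ⟨?_, ?_, ?_⟩
  · -- v > 1
    intro hv1
    have habs : |1 - v| = v - 1 := by rw [abs_of_neg (by linarith)]; ring
    have hinv : (0:ℝ) ≤ (v - 1)⁻¹ := inv_nonneg.mpr (by linarith)
    have hI : I ≤ 2 + (v - 1)⁻¹ := by
      rcases le_or_gt (T - A) 1 with h | h
      · have := I_le_one v hv hX0 h
        linarith
      · have ha := I_split v hv h.le
        have hb := tail_gt v hv1 h.le
        rw [← hIdef] at ha
        linarith
    refine (bump _ hI).trans (le_of_eq ?_)
    rw [habs]; ring
  · -- v = 1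
    intro hv1
    have hlog : (1:ℝ) ≤ Real.log t := by
      have h3 : Real.exp 1 ≤ 3 := le_of_lt (Real.exp_one_lt_d9.trans (by norm_num))
      calc (1:ℝ) = Real.log (Real.exp 1) := (Real.log_exp 1).symm
      _ ≤ Real.log t := Real.log_le_log (Real.exp_pos 1) (le_trans h3 ht)
    have hI : I ≤ 2 * Real.log t := by
      rcases le_or_gt (T - A) 1 with h | h
      · have := I_le_one v hv hX0 h
        linarith
      · have ha := I_split v hv h.le
        rw [← hIdef, hv1, tail_eq h.le] at ha
        have h3 : Real.log (T - A) ≤ Real.log t :=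
          Real.log_le_log (by linarith) (by linarith)
        linarith
    refine (bump _ hI).trans (le_of_eq ?_)
    rw [hv1]
    simp only [sub_self, abs_zero, inv_zero, add_zero]
    ring
  · -- v < 1
    intro hv1
    have hE : (0:ℝ) < 1 - v := by linarith
    have habs : |1 - v| = 1 - v := abs_of_pos hE
    have hinv : (0:ℝ) ≤ (1 - v)⁻¹ := inv_nonneg.mpr hE.le
    have htpow : (1:ℝ) ≤ t ^ ((1 - θ) * (1 - v)) := by
      calc (1:ℝ) = t ^ (0:ℝ) := (Real.rpow_zero t).symm
      _ ≤ t ^ ((1 - θ) * (1 - v)) :=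
          Real.rpow_le_rpow_of_exponent_le (by linarith) (by positivity)
    have hI : I ≤ (2 + (1 - v)⁻¹) * t ^ ((1 - θ) * (1 - v)) := by
      rcases le_or_gt (T - A) 1 with h | h
      · have h1 := I_le_one v hv hX0 h
        nlinarith
      · have ha := I_split v hv h.le
        have hb := tail_lt v hv1 h.le
        rw [← hIdef] at ha
        have hc : (T - A) ^ (1 - v) ≤ t ^ ((1 - θ) * (1 - v)) := by
          calc (T - A) ^ (1 - v) ≤ T ^ (1 - v) :=
              Real.rpow_le_rpow hX0 (by linarith) hE.le
          _ = t ^ ((1 - θ) * (1 - v)) := by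
              rw [hTdef, ← Real.rpow_mul ht0.le]
        have hd : (T - A) ^ (1 - v) / (1 - v) ≤ t ^ ((1 - θ) * (1 - v)) * (1 - v)⁻¹ := by
          rw [div_eq_mul_inv]
          exact mul_le_mul_of_nonneg_right hc hinv
        nlinarith
    have hexp : t ^ (-θ) * t ^ ((1 - θ) * (1 - v)) = t ^ (1 - v - θ * (2 - v)) := by
      rw [← Real.rpow_add ht0]; congr 1; ring
    refine (bump _ hI).trans (le_of_eq ?_)
    rw [habs, ← hexp]; ring
end

section
/- Let m ≥ 8 be an integer. There exists a subset Λ of {−1, 1}^m with |Λ| ≥ e^{m/8} such that for all distinct ι, ι' ∈ Λ, the ℓ¹-distance ‖ι − ι'‖₁ = 2 ∑_{j=1}^{m} 1_{{ι_j ≠ ι'_j}} is at least m/2. -/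
/-!
Take a maximal set `S` of Boolean words of length `m` at pairwise Hamming distance at least
`m / 4`. By maximality the Hamming balls of radius `⌊m / 4⌋` around `S` cover all `2 ^ m` words,
so `2 ^ m ≤ |S| · V`, where `V = ∑_{i ≤ m / 4} (m choose i)` is the volume of such a ball.
Comparing `V · (1/3) ^ (m / 4)` with `(1 + 1/3) ^ m` gives `V ≤ 3 ^ (m / 4) (4/3) ^ m`, and
`e^{m/8} 3^{m/4} (4/3)^m ≤ 2^m` reduces (after raising to the eighth power) to `e ≤ 729 / 256`.
The words are sent to sign vectors by `true ↦ 1`, `false ↦ -1`, which doubles distances.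
-/

open Finset Real

theorem Finset.exists_pairwise_forall_notMem {α : Type*} [Fintype α] [DecidableEq α]
    (r : α → α → Prop) [Std.Symm r] :
    ∃ S : Finset α, (S : Set α).Pairwise r ∧ ∀ y ∉ S, ∃ x ∈ S, ¬ r x y := by
  obtain ⟨S, hS⟩ := (Set.toFinite {S : Finset α | (S : Set α).Pairwise r}).exists_maximal
    ⟨∅, by simp⟩
  refine ⟨S, hS.prop, fun y hy => ?_⟩
  by_contra! hfar
  have hinsert : ((insert y S : Finset α) : Set α).Pairwise r := by
    rw [coe_insert]
    exact hS.prop.insert_of_symm fun x hx _ => symm (hfar x hx)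
  exact hy (hS.2 hinsert (subset_insert y S) (mem_insert_self y S))

theorem sum_range_choose_mul_pow_le {R : Type*} [CommSemiring R] [PartialOrder R]
    [IsOrderedRing R] {t : R} (ht₀ : 0 ≤ t) (ht₁ : t ≤ 1) {n k : ℕ} (hk : k ≤ n) :
    (∑ i ∈ range (k + 1), (n.choose i : R)) * t ^ k ≤ (1 + t) ^ n := by
  calc (∑ i ∈ range (k + 1), (n.choose i : R)) * t ^ k
      = ∑ i ∈ range (k + 1), (n.choose i : R) * t ^ k := sum_mul ..
    _ ≤ ∑ i ∈ range (k + 1), (n.choose i : R) * t ^ i := sum_le_sum fun i hi =>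
        mul_le_mul_of_nonneg_left
          (pow_le_pow_of_le_one ht₀ ht₁ (Nat.lt_succ_iff.1 (mem_range.1 hi))) (Nat.cast_nonneg _)
    _ ≤ ∑ i ∈ range (n + 1), (n.choose i : R) * t ^ i :=
        sum_le_sum_of_subset_of_nonneg (range_subset_range.2 (by omega)) fun _ _ _ => by
          positivity
    _ = (1 + t) ^ n := by rw [add_comm 1 t, add_pow]; simp [mul_comm]

theorem exp_div_eight_mul_sum_range_choose_le (n : ℕ) :
    exp (n / 8) * ∑ i ∈ range (n / 4 + 1), (n.choose i : ℝ) ≤ 2 ^ n := by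
  set k := n / 4
  have hk : 4 * k ≤ n := Nat.mul_div_le n 4
  have hV : ∑ i ∈ range (k + 1), (n.choose i : ℝ) ≤ 3 ^ k * (4 / 3) ^ n :=
    calc ∑ i ∈ range (k + 1), (n.choose i : ℝ)
        = (∑ i ∈ range (k + 1), (n.choose i : ℝ)) * (1 / 3) ^ k * 3 ^ k := by
          rw [mul_assoc, ← mul_pow]; norm_num
      _ ≤ (1 + 1 / 3) ^ n * 3 ^ k := by
          gcongr; exact sum_range_choose_mul_pow_le (by norm_num) (by norm_num) (by omega)
      _ = 3 ^ k * (4 / 3) ^ n := by norm_num [mul_comm]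
  have he : exp 1 ≤ 729 / 256 := by have := exp_one_lt_d9; norm_num at this; linarith
  have h3k : (3 ^ k : ℝ) ^ 8 ≤ 9 ^ n := by
    rw [← pow_mul, show (9 : ℝ) = 3 ^ 2 by norm_num, ← pow_mul]
    exact pow_le_pow_right₀ (by norm_num) (by omega)
  have h8 : exp (n / 8) ^ 8 = exp 1 ^ n := by
    rw [← exp_nat_mul, ← exp_nat_mul]; ring_nf
  have hbound : (exp (n / 8) * (3 ^ k * (4 / 3) ^ n)) ^ 8 ≤ (2 ^ n) ^ 8 :=
    calc (exp (n / 8) * (3 ^ k * (4 / 3) ^ n)) ^ 8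
        = exp 1 ^ n * (3 ^ k) ^ 8 * ((4 / 3) ^ 8) ^ n := by
          rw [mul_pow, mul_pow, h8, pow_right_comm (4 / 3 : ℝ) n 8, mul_assoc]
      _ ≤ (729 / 256) ^ n * 9 ^ n * ((4 / 3) ^ 8) ^ n := by gcongr
      _ = (2 ^ n) ^ 8 := by rw [← mul_pow, ← mul_pow, pow_right_comm]; norm_num
  calc exp (n / 8) * ∑ i ∈ range (k + 1), (n.choose i : ℝ)
      ≤ exp (n / 8) * (3 ^ k * (4 / 3) ^ n) := by gcongr
    _ ≤ 2 ^ n := le_of_pow_le_pow_left₀ (by norm_num) (by positivity) hbound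

section Hamming

variable {ι : Type*} [Fintype ι]

theorem card_filter_hammingDist_le [DecidableEq ι] (x : ι → Bool) (k : ℕ) :
    #{y | hammingDist x y ≤ k} ≤ ∑ i ∈ range (k + 1), (Fintype.card ι).choose i := by
  calc #{y | hammingDist x y ≤ k}
      ≤ #((range (k + 1)).biUnion fun i => powersetCard i (univ : Finset ι)) := by
        refine card_le_card_of_injOn (fun y => ({j | x j ≠ y j} : Finset ι))
          (fun y hy => ?_) fun y _ y' _ h => ?_
        · simpa [mem_powersetCard, Nat.lt_succ_iff, hammingDist] using hy
        · funext j
          have hj := congrArg (j ∈ ·) h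
          simp only [mem_filter, mem_univ, true_and, eq_iff_iff] at hj
          revert hj
          cases x j <;> cases y j <;> cases y' j <;> decide
    _ ≤ ∑ i ∈ range (k + 1), #(powersetCard i (univ : Finset ι)) := card_biUnion_le
    _ = ∑ i ∈ range (k + 1), (Fintype.card ι).choose i := by simp [card_powersetCard]

theorem two_pow_le_card_mul_sum_choose [DecidableEq ι] {S : Finset (ι → Bool)} {k : ℕ}
    (hS : ∀ y, ∃ x ∈ S, hammingDist x y ≤ k) :
    2 ^ Fintype.card ι ≤ #S * ∑ i ∈ range (k + 1), (Fintype.card ι).choose i := by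
  calc 2 ^ Fintype.card ι = #(univ : Finset (ι → Bool)) := by simp
    _ ≤ #(S.biUnion fun x => {y | hammingDist x y ≤ k}) := card_le_card fun y _ => by
        obtain ⟨x, hx, hxy⟩ := hS y
        exact mem_biUnion.2 ⟨x, hx, by simpa using hxy⟩
    _ ≤ ∑ x ∈ S, #{y | hammingDist x y ≤ k} := card_biUnion_le
    _ ≤ ∑ _x ∈ S, ∑ i ∈ range (k + 1), (Fintype.card ι).choose i :=
        sum_le_sum fun x _ => card_filter_hammingDist_le x k
    _ = #S * ∑ i ∈ range (k + 1), (Fintype.card ι).choose i := by rw [sum_const, smul_eq_mul]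

/-- The Gilbert–Varshamov bound; `r ≤ k + 1` is what lets words closer than `r` to a maximal
code lie within distance `k` of it. -/
theorem exists_pairwise_le_hammingDist_two_pow_le [DecidableEq ι] {r k : ℕ}
    (hrk : r ≤ k + 1) :
    ∃ S : Finset (ι → Bool), (S : Set (ι → Bool)).Pairwise (fun x y => r ≤ hammingDist x y) ∧
      2 ^ Fintype.card ι ≤ #S * ∑ i ∈ range (k + 1), (Fintype.card ι).choose i := by
  have : Std.Symm fun x y : ι → Bool => r ≤ hammingDist x y :=
    ⟨fun x y h => hammingDist_comm x y ▸ h⟩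
  obtain ⟨S, hsep, hmax⟩ :=
    exists_pairwise_forall_notMem fun x y : ι → Bool => r ≤ hammingDist x y
  refine ⟨S, hsep, two_pow_le_card_mul_sum_choose fun y => ?_⟩
  by_cases hy : y ∈ S
  · exact ⟨y, hy, by simp⟩
  · obtain ⟨x, hx, hxy⟩ := hmax y hy
    exact ⟨x, hx, by omega⟩

end Hamming

section SignVector

variable {ι : Type*}

def signVector (x : ι → Bool) : ι → ℝ := fun j => if x j then 1 else -1

theorem signVector_injective : Function.Injective (signVector (ι := ι)) := by
  intro x y h
  funext j
  have hj := congrFun h j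
  revert hj
  unfold signVector
  cases x j <;> cases y j <;> norm_num

theorem signVector_eq_one_or_eq_neg_one (x : ι → Bool) (j : ι) :
    signVector x j = 1 ∨ signVector x j = -1 := by
  unfold signVector; split_ifs <;> simp

theorem sum_abs_sub_signVector [Fintype ι] (x y : ι → Bool) :
    ∑ j, |signVector x j - signVector y j| = 2 * hammingDist x y := by
  rw [hammingDist, natCast_card_filter, mul_sum]
  refine sum_congr rfl fun j _ => ?_
  unfold signVector
  cases x j <;> cases y j <;> norm_num

end SignVector

theorem stmt_16_general (m : ℕ) :
    ∃ Λ : Finset (Fin m → ℝ),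
      (∀ ι ∈ Λ, ∀ j, ι j = 1 ∨ ι j = -1) ∧
      Real.exp ((m : ℝ) / 8) ≤ (Λ.card : ℝ) ∧
      ∀ ι ∈ Λ, ∀ ι' ∈ Λ, ι ≠ ι' →
        (m : ℝ) / 2 ≤ ∑ j, |ι j - ι' j| := by
  obtain ⟨S, hsep, hcard⟩ := exists_pairwise_le_hammingDist_two_pow_le (ι := Fin m)
    (r := (m + 3) / 4) (k := m / 4) (by omega)
  rw [Fintype.card_fin] at hcard
  refine ⟨S.image signVector, ?_, ?_, ?_⟩
  · simp only [mem_image]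
    rintro _ ⟨x, -, rfl⟩ j
    exact signVector_eq_one_or_eq_neg_one x j
  · rw [card_image_of_injective _ signVector_injective]
    have hV : (0 : ℝ) < ∑ i ∈ range (m / 4 + 1), (m.choose i : ℝ) :=
      sum_pos' (fun i _ => by positivity) ⟨0, by simp, by simp⟩
    refine le_of_mul_le_mul_right ?_ hV
    calc exp (m / 8) * _ ≤ (2 : ℝ) ^ m := exp_div_eight_mul_sum_range_choose_le m
      _ ≤ #S * ∑ i ∈ range (m / 4 + 1), (m.choose i : ℝ) := by exact_mod_cast hcard
  · simp only [mem_image]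
    rintro _ ⟨x, hx, rfl⟩ _ ⟨y, hy, rfl⟩ hxy
    have hdist : m ≤ 4 * hammingDist x y := by
      have := hsep hx hy (ne_of_apply_ne _ hxy)
      omega
    rw [sum_abs_sub_signVector]
    have : (m : ℝ) ≤ 4 * hammingDist x y := by exact_mod_cast hdist
    linarith

/-- Varshamov–Gilbert bound: for `m ≥ 8` there is a set `Λ` of sign vectors in
`{-1, 1}^m` with `|Λ| ≥ e^{m/8}` whose distinct elements `ι, ι'` satisfy
`‖ι - ι'‖₁ = 2 ∑_j 1_{ι_j ≠ ι'_j} ≥ m/2`. -/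
theorem stmt_16 (m : ℕ) (hm : 8 ≤ m) :
    ∃ Λ : Finset (Fin m → ℝ),
      (∀ ι ∈ Λ, ∀ j, ι j = 1 ∨ ι j = -1) ∧
      Real.exp ((m : ℝ) / 8) ≤ (Λ.card : ℝ) ∧
      ∀ ι ∈ Λ, ∀ ι' ∈ Λ, ι ≠ ι' →
        (m : ℝ) / 2 ≤ ∑ j, |ι j - ι' j| :=
  stmt_16_general m
end
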